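/- arXiv:1710.00298 — 4 statements merged into one kernel-verified Lean document; each statement's English description precedes it below -/
import Mathlib

section
/- (Continuation Principle for Hypergraphs) For every hypergraph H and vertex sets A, B with A ⊆ B ⊆ V(H), one has γ_g(H|A) ≥ γ_g(H|B). -/
attribute [local instance 10] Classical.propDecidable

variable {V : Type}

/-- The closed neighborhood of a vertex in a hypergraph given by its edge set. -/
noncomputable def closedNbhd [Fintype V] (H : Finset (Finset V)) (v : V) : Finset V :=
  Finset.univ.filter (fun u => u = v ∨ ∃ e ∈ H, u ∈ e ∧ v ∈ e)

private lemma card_sdiff_union_lt [Fintype V] {S T : Finset V} (h : ¬ T ⊆ S) :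
    (Finset.univ \ (S ∪ T)).card < (Finset.univ \ S).card := by
  classical
  obtain ⟨u, huT, huS⟩ := Finset.not_subset.mp h
  apply Finset.card_lt_card
  rw [Finset.ssubset_def]
  constructor
  · exact Finset.sdiff_subset_sdiff (Finset.Subset.refl _) Finset.subset_union_left
  · intro hc
    have hu : u ∈ Finset.univ \ S := by simp [huS]
    have := hc hu
    simp [huT] at this

/-- Value of the domination game on a hypergraph: `S` is the set of vertices already
dominated, `dom = true` iff Dominator is the next player to move.  A legal move is a vertex
dominating at least one new vertex; Dominator minimizes, Staller maximizes the total
number of moves, and both play optimally. -/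
noncomputable def domGameVal [Fintype V] (H : Finset (Finset V)) (dom : Bool) (S : Finset V) :
    ℕ :=
  if h : (Finset.univ.filter fun v => ¬ closedNbhd H v ⊆ S).Nonempty then
    1 + (if dom then
        (Finset.univ.filter fun v => ¬ closedNbhd H v ⊆ S).attach.inf'
          (Finset.attach_nonempty_iff.mpr h)
          (fun v => domGameVal H false (S ∪ closedNbhd H v.1))
      else
        (Finset.univ.filter fun v => ¬ closedNbhd H v ⊆ S).attach.sup'
          (Finset.attach_nonempty_iff.mpr h)
          (fun v => domGameVal H true (S ∪ closedNbhd H v.1)))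
  else 0
termination_by (Finset.univ \ S).card
decreasing_by
  · exact card_sdiff_union_lt (Finset.mem_filter.mp v.2).2
  · exact card_sdiff_union_lt (Finset.mem_filter.mp v.2).2

/-- The game domination number (Dominator starts). -/
noncomputable def gammaGame [Fintype V] (H : Finset (Finset V)) : ℕ :=
  domGameVal H true ∅

/-! Monotonicity in the dominated set is proved for both players at once, by induction on the
number of undominated vertices. Staller's optimal move against `B` is legal against `A ⊆ B`.
Dominator against `B` copies his optimal move `w` against `A`; if `w` is no longer legal then
`N[w] ⊆ B`, so any legal move leaves at least as much dominated. -/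

section DominationGame

variable [Fintype V] (H : Finset (Finset V))

lemma domGameVal_eq_zero {dom : Bool} {S : Finset V} (hS : ∀ v, closedNbhd H v ⊆ S) :
    domGameVal H dom S = 0 := by
  rw [domGameVal, dif_neg]
  simp [hS]

lemma domGameVal_true_le {S : Finset V} {v : V} (hv : ¬ closedNbhd H v ⊆ S) :
    domGameVal H true S ≤ 1 + domGameVal H false (S ∪ closedNbhd H v) := by
  have hmem : v ∈ Finset.univ.filter fun u => ¬ closedNbhd H u ⊆ S := by simp [hv]
  rw [domGameVal, dif_pos ⟨v, hmem⟩, if_pos rfl]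
  exact Nat.add_le_add_left (Finset.inf'_le _ (Finset.mem_attach _ ⟨v, hmem⟩)) 1

lemma exists_domGameVal_true_eq {S : Finset V} {v : V} (hv : ¬ closedNbhd H v ⊆ S) :
    ∃ w, ¬ closedNbhd H w ⊆ S ∧
      domGameVal H true S = 1 + domGameVal H false (S ∪ closedNbhd H w) := by
  have hmem : v ∈ Finset.univ.filter fun u => ¬ closedNbhd H u ⊆ S := by simp [hv]
  have hne := Finset.attach_nonempty_iff.mpr ⟨v, hmem⟩
  obtain ⟨w, -, hw⟩ := Finset.exists_mem_eq_inf' hne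
    (fun u => domGameVal H false (S ∪ closedNbhd H u.1))
  refine ⟨w.1, (Finset.mem_filter.mp w.2).2, ?_⟩
  rw [domGameVal, dif_pos ⟨v, hmem⟩, if_pos rfl, hw]

lemma le_domGameVal_false {S : Finset V} {v : V} (hv : ¬ closedNbhd H v ⊆ S) :
    1 + domGameVal H true (S ∪ closedNbhd H v) ≤ domGameVal H false S := by
  have hmem : v ∈ Finset.univ.filter fun u => ¬ closedNbhd H u ⊆ S := by simp [hv]
  conv_rhs => rw [domGameVal, dif_pos ⟨v, hmem⟩, if_neg Bool.false_ne_true]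
  exact Nat.add_le_add_left (Finset.le_sup' (fun u => domGameVal H true (S ∪ closedNbhd H u.1))
    (Finset.mem_attach _ ⟨v, hmem⟩)) 1

lemma exists_domGameVal_false_eq {S : Finset V} {v : V} (hv : ¬ closedNbhd H v ⊆ S) :
    ∃ w, ¬ closedNbhd H w ⊆ S ∧
      domGameVal H false S = 1 + domGameVal H true (S ∪ closedNbhd H w) := by
  have hmem : v ∈ Finset.univ.filter fun u => ¬ closedNbhd H u ⊆ S := by simp [hv]
  have hne := Finset.attach_nonempty_iff.mpr ⟨v, hmem⟩
  obtain ⟨w, -, hw⟩ := Finset.exists_mem_eq_sup' hne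
    (fun u => domGameVal H true (S ∪ closedNbhd H u.1))
  refine ⟨w.1, (Finset.mem_filter.mp w.2).2, ?_⟩
  rw [domGameVal, dif_pos ⟨v, hmem⟩, if_neg Bool.false_ne_true, hw]

theorem domGameVal_antitone (dom : Bool) : Antitone (domGameVal H dom) := by
  intro A B hAB
  induction hn : (Finset.univ \ A).card using Nat.strong_induction_on generalizing A B dom with
  | _ n IH =>
  have le_after_move {u : V} (hu : ¬ closedNbhd H u ⊆ A) (dom' : Bool) {C : Finset V}
      (hC : A ∪ closedNbhd H u ⊆ C) :
      domGameVal H dom' C ≤ domGameVal H dom' (A ∪ closedNbhd H u) :=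
    IH _ (hn ▸ card_sdiff_union_lt hu) dom' hC rfl
  by_cases hB : ∀ v, closedNbhd H v ⊆ B
  · rw [domGameVal_eq_zero H hB]
    exact Nat.zero_le _
  obtain ⟨v, hvB⟩ := not_forall.mp hB
  have hvA : ¬ closedNbhd H v ⊆ A := fun h => hvB (h.trans hAB)
  cases dom with
  | true =>
    obtain ⟨w, hwA, hw⟩ := exists_domGameVal_true_eq H hvA
    obtain ⟨u, huB, hsub⟩ :
        ∃ u, ¬ closedNbhd H u ⊆ B ∧ A ∪ closedNbhd H w ⊆ B ∪ closedNbhd H u := by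
      by_cases hwB : closedNbhd H w ⊆ B
      · exact ⟨v, hvB, Finset.union_subset (hAB.trans Finset.subset_union_left)
          (hwB.trans Finset.subset_union_left)⟩
      · exact ⟨w, hwB, Finset.union_subset_union hAB le_rfl⟩
    calc domGameVal H true B ≤ 1 + domGameVal H false (B ∪ closedNbhd H u) :=
          domGameVal_true_le H huB
      _ ≤ 1 + domGameVal H false (A ∪ closedNbhd H w) :=
          Nat.add_le_add_left (le_after_move hwA false hsub) 1
      _ = domGameVal H true A := hw.symm
  | false =>
    obtain ⟨w, hwB, hw⟩ := exists_domGameVal_false_eq H hvB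
    have hwA : ¬ closedNbhd H w ⊆ A := fun h => hwB (h.trans hAB)
    calc domGameVal H false B = 1 + domGameVal H true (B ∪ closedNbhd H w) := hw
      _ ≤ 1 + domGameVal H true (A ∪ closedNbhd H w) :=
          Nat.add_le_add_left (le_after_move hwA true (Finset.union_subset_union hAB le_rfl)) 1
      _ ≤ domGameVal H false A := le_domGameVal_false H hwA

end DominationGame

/-- Continuation Principle for Hypergraphs: if `A ⊆ B` are vertex sets of a
hypergraph `H`, then `γ_g(H|A) ≥ γ_g(H|B)` for the residual Dominator-start games. -/
theorem stmt_6 (V : Type) [Fintype V] (H : Finset (Finset V)) (A B : Finset V)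
    (hAB : A ⊆ B) :
    domGameVal H true B ≤ domGameVal H true A :=
  domGameVal_antitone H true hAB
end

section
/- For every 3-uniform hypergraph H, the 2-section graph [H]_2 is a graph in which every edge belongs to a triangle and γ_g(H) = γ_g([H]_2); conversely, for every graph G in which every edge belongs to a triangle, the 3-uniform hypergraph H on V(G) whose edges are exactly the vertex sets of triangles of G satisfies [H]_2 = G and γ_g(H) = γ_g(G). -/
attribute [local instance 10] Classical.propDecidable

variable {V : Type}

/-- The closed neighborhood of a vertex in a simple graph, as a finset. -/
noncomputable def gClosedNbhd [Fintype V] (G : SimpleGraph V) (v : V) : Finset V :=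
  Finset.univ.filter (fun u => u = v ∨ G.Adj u v)

/-- Value of the domination game on a simple graph: `S` is the set of vertices already
dominated, `dom = true` iff Dominator is the next player to move. -/
noncomputable def gDomGameVal [Fintype V] (G : SimpleGraph V) (dom : Bool) (S : Finset V) :
    ℕ :=
  if h : (Finset.univ.filter fun v => ¬ gClosedNbhd G v ⊆ S).Nonempty then
    1 + (if dom then
        (Finset.univ.filter fun v => ¬ gClosedNbhd G v ⊆ S).attach.inf'
          (Finset.attach_nonempty_iff.mpr h)
          (fun v => gDomGameVal G false (S ∪ gClosedNbhd G v.1))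
      else
        (Finset.univ.filter fun v => ¬ gClosedNbhd G v ⊆ S).attach.sup'
          (Finset.attach_nonempty_iff.mpr h)
          (fun v => gDomGameVal G true (S ∪ gClosedNbhd G v.1)))
  else 0
termination_by (Finset.univ \ S).card
decreasing_by
  · exact card_sdiff_union_lt (Finset.mem_filter.mp v.2).2
  · exact card_sdiff_union_lt (Finset.mem_filter.mp v.2).2

/-- The game domination number of a simple graph (Dominator starts). -/
noncomputable def gGammaGame [Fintype V] (G : SimpleGraph V) : ℕ :=
  gDomGameVal G true ∅

/-- The 2-section graph of a hypergraph: two vertices are adjacent iff they are different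
and share an edge. -/
noncomputable def twoSection [Fintype V] (H : Finset (Finset V)) : SimpleGraph V :=
  SimpleGraph.fromRel (fun u v => ∃ e ∈ H, u ∈ e ∧ v ∈ e)

/-- The 3-uniform hypergraph whose edges are the vertex sets of the triangles of `G`. -/
noncomputable def triangleHypergraph [Fintype V] (G : SimpleGraph V) :
    Finset (Finset V) :=
  Finset.univ.filter (fun e : Finset V =>
    ∃ u v w : V, G.Adj u v ∧ G.Adj u w ∧ G.Adj v w ∧ e = {u, v, w})


noncomputable def genVal [Fintype V] (N : V → Finset V) (dom : Bool) (S : Finset V) : ℕ :=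
  if h : (Finset.univ.filter fun v => ¬ N v ⊆ S).Nonempty then
    1 + (if dom then
        (Finset.univ.filter fun v => ¬ N v ⊆ S).attach.inf'
          (Finset.attach_nonempty_iff.mpr h)
          (fun v => genVal N false (S ∪ N v.1))
      else
        (Finset.univ.filter fun v => ¬ N v ⊆ S).attach.sup'
          (Finset.attach_nonempty_iff.mpr h)
          (fun v => genVal N true (S ∪ N v.1)))
  else 0
termination_by (Finset.univ \ S).card
decreasing_by
  · exact card_sdiff_union_lt (Finset.mem_filter.mp v.2).2
  · exact card_sdiff_union_lt (Finset.mem_filter.mp v.2).2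

lemma domGameVal_eq_gen [Fintype V] (H : Finset (Finset V)) :
    ∀ (n : ℕ) (S : Finset V), (Finset.univ \ S).card ≤ n →
      ∀ dom, domGameVal H dom S = genVal (closedNbhd H) dom S := by
  intro n
  induction n with
  | zero =>
    intro S hS dom
    have h1 : ¬ (Finset.univ.filter fun v => ¬ closedNbhd H v ⊆ S).Nonempty := by
      simp only [Finset.filter_nonempty_iff]
      push_neg
      intro v _ u _
      by_contra hu
      have hmem : u ∈ Finset.univ \ S := by simp [hu]
      have := Finset.card_pos.mpr ⟨u, hmem⟩
      omega
    rw [domGameVal, genVal, dif_neg h1, dif_neg h1]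
  | succ n ih =>
    intro S hS dom
    rw [domGameVal, genVal]
    by_cases h : (Finset.univ.filter fun v => ¬ closedNbhd H v ⊆ S).Nonempty
    · rw [dif_pos h, dif_pos h]
      have key : ∀ v : V, ¬ closedNbhd H v ⊆ S → ∀ b,
          domGameVal H b (S ∪ closedNbhd H v) = genVal (closedNbhd H) b (S ∪ closedNbhd H v) := by
        intro v hv b
        apply ih
        have := card_sdiff_union_lt (S := S) (T := closedNbhd H v) hv
        omega
      congr 1
      cases dom
      · try simp only [Bool.false_eq_true, if_false]
        apply Finset.sup'_congr _ rfl
        intro v _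
        exact key v.1 (Finset.mem_filter.mp v.2).2 true
      · try simp only [if_true]
        apply Finset.inf'_congr _ rfl
        intro v _
        exact key v.1 (Finset.mem_filter.mp v.2).2 false
    · rw [dif_neg h, dif_neg h]

lemma gDomGameVal_eq_gen [Fintype V] (G : SimpleGraph V) :
    ∀ (n : ℕ) (S : Finset V), (Finset.univ \ S).card ≤ n →
      ∀ dom, gDomGameVal G dom S = genVal (gClosedNbhd G) dom S := by
  intro n
  induction n with
  | zero =>
    intro S hS dom
    have h1 : ¬ (Finset.univ.filter fun v => ¬ gClosedNbhd G v ⊆ S).Nonempty := by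
      simp only [Finset.filter_nonempty_iff]
      push_neg
      intro v _ u _
      by_contra hu
      have hmem : u ∈ Finset.univ \ S := by simp [hu]
      have := Finset.card_pos.mpr ⟨u, hmem⟩
      omega
    rw [gDomGameVal, genVal, dif_neg h1, dif_neg h1]
  | succ n ih =>
    intro S hS dom
    rw [gDomGameVal, genVal]
    by_cases h : (Finset.univ.filter fun v => ¬ gClosedNbhd G v ⊆ S).Nonempty
    · rw [dif_pos h, dif_pos h]
      have key : ∀ v : V, ¬ gClosedNbhd G v ⊆ S → ∀ b,
          gDomGameVal G b (S ∪ gClosedNbhd G v) = genVal (gClosedNbhd G) b (S ∪ gClosedNbhd G v) := by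
        intro v hv b
        apply ih
        have := card_sdiff_union_lt (S := S) (T := gClosedNbhd G v) hv
        omega
      congr 1
      cases dom
      · try simp only [Bool.false_eq_true, if_false]
        apply Finset.sup'_congr _ rfl
        intro v _
        exact key v.1 (Finset.mem_filter.mp v.2).2 true
      · try simp only [if_true]
        apply Finset.inf'_congr _ rfl
        intro v _
        exact key v.1 (Finset.mem_filter.mp v.2).2 false
    · rw [dif_neg h, dif_neg h]

lemma nbhd_eq [Fintype V] (H : Finset (Finset V)) (v : V) :
    closedNbhd H v = gClosedNbhd (twoSection H) v := by
  ext u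
  simp only [closedNbhd, gClosedNbhd, twoSection, Finset.mem_filter, Finset.mem_univ,
    true_and, SimpleGraph.fromRel_adj]
  constructor
  · rintro (rfl | h)
    · exact Or.inl rfl
    · by_cases huv : u = v
      · exact Or.inl huv
      · exact Or.inr ⟨huv, Or.inl h⟩
  · rintro (rfl | ⟨_, h | ⟨e, he, hv, hu⟩⟩)
    · exact Or.inl rfl
    · exact Or.inr h
    · exact Or.inr ⟨e, he, hu, hv⟩

lemma gamma_eq_of_nbhd [Fintype V] {H : Finset (Finset V)} {G : SimpleGraph V}
    (hn : ∀ v, closedNbhd H v = gClosedNbhd G v) :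
    gammaGame H = gGammaGame G := by
  have hfun : closedNbhd H = gClosedNbhd G := funext hn
  rw [gammaGame, gGammaGame,
    domGameVal_eq_gen H (Finset.univ \ (∅ : Finset V)).card ∅ le_rfl true,
    gDomGameVal_eq_gen G (Finset.univ \ (∅ : Finset V)).card ∅ le_rfl true, hfun]


/-- for every 3-uniform hypergraph `H`, every edge of the 2-section graph
`[H]₂` belongs to a triangle and `γ_g(H) = γ_g([H]₂)`; conversely, for every graph `G` in
which every edge belongs to a triangle, the 3-uniform hypergraph whose edges are the
triangles of `G` has 2-section graph `G` and the same game domination number as `G`. -/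
theorem stmt_8 (V : Type) [Fintype V] :
    (∀ H : Finset (Finset V), (∀ e ∈ H, e.card = 3) →
      (∀ u v : V, (twoSection H).Adj u v →
        ∃ w : V, (twoSection H).Adj u w ∧ (twoSection H).Adj v w) ∧
      gammaGame H = gGammaGame (twoSection H)) ∧
    (∀ G : SimpleGraph V, (∀ u v : V, G.Adj u v → ∃ w : V, G.Adj u w ∧ G.Adj v w) →
      twoSection (triangleHypergraph G) = G ∧
      gammaGame (triangleHypergraph G) = gGammaGame G) := by
  constructor
  · intro H h3
    refine ⟨?_, gamma_eq_of_nbhd (nbhd_eq H)⟩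
    intro u v huv
    rw [twoSection, SimpleGraph.fromRel_adj] at huv
    obtain ⟨hne, h⟩ := huv
    have he : ∃ e ∈ H, u ∈ e ∧ v ∈ e := by
      rcases h with ⟨e, he, hu, hv⟩ | ⟨e, he, hv, hu⟩ <;> exact ⟨e, he, hu, hv⟩
    obtain ⟨e, heH, hu, hv⟩ := he
    have hcard : ({u, v} : Finset V).card = 2 := by
      rw [Finset.card_insert_of_notMem (by simp [hne]), Finset.card_singleton]
    have hsub : ({u, v} : Finset V) ⊆ e := by
      intro x hx
      rcases Finset.mem_insert.mp hx with rfl | hx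
      · exact hu
      · rw [Finset.mem_singleton] at hx; subst hx; exact hv
    have hlt : ({u, v} : Finset V).card < e.card := by
      rw [hcard, h3 e heH]; omega
    have hss : ({u, v} : Finset V) ⊂ e := Finset.ssubset_iff_subset_ne.mpr
      ⟨hsub, fun h => by rw [h] at hlt; omega⟩
    obtain ⟨w, hwe, hw⟩ := Finset.exists_of_ssubset hss
    have hwu : w ≠ u := fun h => hw (by simp [h])
    have hwv : w ≠ v := fun h => hw (by simp [h])
    refine ⟨w, ?_, ?_⟩ <;> rw [twoSection, SimpleGraph.fromRel_adj]
    · exact ⟨fun h => hwu h.symm, Or.inl ⟨e, heH, hu, hwe⟩⟩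
    · exact ⟨fun h => hwv h.symm, Or.inl ⟨e, heH, hv, hwe⟩⟩
  · intro G hG
    have hts : twoSection (triangleHypergraph G) = G := by
      ext u v
      rw [twoSection, SimpleGraph.fromRel_adj]
      constructor
      · rintro ⟨hne, h⟩
        have he : ∃ e ∈ triangleHypergraph G, u ∈ e ∧ v ∈ e := by
          rcases h with ⟨e, he, hu, hv⟩ | ⟨e, he, hv, hu⟩ <;> exact ⟨e, he, hu, hv⟩
        obtain ⟨e, heH, hu, hv⟩ := he
        rw [triangleHypergraph, Finset.mem_filter] at heH
        obtain ⟨-, a, b, c, hab, hac, hbc, rfl⟩ := heH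
        simp only [Finset.mem_insert, Finset.mem_singleton] at hu hv
        rcases hu with rfl | rfl | rfl <;> rcases hv with rfl | rfl | rfl <;>
          first
            | exact absurd rfl hne
            | assumption
            | exact hab.symm
            | exact hac.symm
            | exact hbc.symm
      · intro h
        obtain ⟨w, huw, hvw⟩ := hG u v h
        refine ⟨h.ne, Or.inl ⟨{u, v, w}, ?_, by simp, by simp⟩⟩
        rw [triangleHypergraph, Finset.mem_filter]
        exact ⟨Finset.mem_univ _, u, v, w, h, huw, hvw, rfl⟩
    have hn : ∀ v, closedNbhd (triangleHypergraph G) v = gClosedNbhd G v := by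
      intro v
      rw [nbhd_eq, hts]
    exact ⟨hts, gamma_eq_of_nbhd hn⟩
end

section
/- Let H'_k be the random k-uniform multi-hypergraph with vertex set [⌈k·log k⌉] whose k edges e_1,…,e_k are chosen independently and uniformly at random from all k-element subsets of the vertex set. Then the probability that for every vertex subset X of size ⌊log²k − 10·log k·log log k⌋ at least (log⁹k)/2 of the edges of H'_k are disjoint from X tends to 1 as k → ∞ (log denotes the natural logarithm). -/
/-!
Write `L = log k`, `n = ⌈k L⌉` and `m = ⌊L² - 10 L log L⌋`. A uniformly random `k`-subset of
`[n]` avoids a fixed `m`-set `X` with probability `p = C(n-m,k)/C(n,k) ≥ exp(-mk/(n-m-k))`,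
and `mk/(n-m-k) ≤ L - 10 log L + 6`, so `kp ≥ e⁻⁶ L¹⁰`: about `L¹⁰` edges avoid `X` on average.
The exponential-moment (Chernoff) bound with `θ = 1/L` shows that fewer than `L⁹/2` of them do
with probability at most `θ^(-L⁹/2) (1 - (1-θ)p)^k ≤ exp(L⁹ log L / 2 - L¹⁰/1458)`, and a union
bound over the `C(n,m) ≤ exp(2L³)` choices of `X` leaves a failure probability below `1/k`.
-/

open Finset Real

theorem exp_neg_div_one_sub_le {x : ℝ} (hx : x < 1) : exp (-(x / (1 - x))) ≤ 1 - x := by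
  have hx' : 0 < 1 - x := sub_pos.2 hx
  rw [← le_log_iff_exp_le hx']
  convert one_sub_inv_le_log_of_pos hx' using 1
  field_simp
  ring

theorem choose_add_mul_one_sub_div_pow_le {a r : ℕ} (hr : r ≤ a) (m : ℕ) :
    ((a + m).choose r : ℝ) * (1 - r / a) ^ m ≤ a.choose r := by
  obtain rfl | hr0 := r.eq_zero_or_pos
  · simp
  have ha : (0 : ℝ) < a := by exact_mod_cast hr0.trans_le hr
  have hx : (0 : ℝ) ≤ 1 - r / a := sub_nonneg.2 ((div_le_one ha).2 (by exact_mod_cast hr))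
  induction m with
  | zero => simp
  | succ m ih =>
    set b := a + m
    have hrb : r ≤ b + 1 := by omega
    have pascal : ((b + 1).choose r : ℝ) * (1 - r / (b + 1)) = b.choose r := by
      have h := congrArg (Nat.cast : ℕ → ℝ) (Nat.choose_mul_succ_eq b r)
      push_cast [Nat.cast_sub hrb] at h
      field_simp
      linarith
    have step : ((b + 1).choose r : ℝ) * (1 - r / a) ≤ b.choose r := by
      rw [← pascal]
      gcongr
      norm_cast
      omega
    calc ((a + (m + 1)).choose r : ℝ) * (1 - r / a) ^ (m + 1)
        = ((b + 1).choose r * (1 - r / a)) * (1 - r / a) ^ m := by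
          rw [← add_assoc, pow_succ]; ring
      _ ≤ b.choose r * (1 - r / a) ^ m := by gcongr
      _ ≤ a.choose r := ih

theorem choose_mul_exp_le_choose_sub {n m r : ℕ} (h : m + r < n) :
    (n.choose r : ℝ) * exp (-(m * r / (n - m - r))) ≤ (n - m).choose r := by
  set a := n - m
  have han : a + m = n := by omega
  have hgap : (0 : ℝ) < a - r := by
    rw [sub_pos]; exact_mod_cast (by omega : r < a)
  have ha : (0 : ℝ) < a := by linarith [(r.cast_nonneg : (0 : ℝ) ≤ r)]
  have hx : (r : ℝ) / a < 1 := (div_lt_one ha).2 (by linarith)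
  have hxx : (r : ℝ) / a / (1 - r / a) = r / (a - r) := by
    field_simp
  have hcast : (n : ℝ) - m - r = a - r := by
    simp only [a]; push_cast [Nat.cast_sub (by omega : m ≤ n)]; ring
  calc (n.choose r : ℝ) * exp (-(m * r / (n - m - r)))
      = (n.choose r : ℝ) * exp (-(r / a / (1 - r / a))) ^ m := by
        rw [← exp_nat_mul, hxx, hcast]; ring_nf
    _ ≤ (n.choose r : ℝ) * (1 - r / a) ^ m := by gcongr; exact exp_neg_div_one_sub_le hx
    _ ≤ a.choose r := han ▸ choose_add_mul_one_sub_div_pow_le (by omega) m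

theorem sub_pow_le_pow_mul_exp {N a : ℝ} (hN : 0 < N) (ha : a ≤ N) (k : ℕ) :
    (N - a) ^ k ≤ N ^ k * exp (-(k * a / N)) := by
  have hbase : N - a ≤ N * exp (-(a / N)) := by
    have := one_sub_le_exp_neg (a / N)
    calc N - a = N * (1 - a / N) := by field_simp
      _ ≤ N * exp (-(a / N)) := by gcongr
  calc (N - a) ^ k ≤ (N * exp (-(a / N))) ^ k := pow_le_pow_left₀ (sub_nonneg.2 ha) hbase k
    _ = N ^ k * exp (-(k * a / N)) := by rw [mul_pow, ← exp_nat_mul]; ring_nf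

section Counting

variable {α : Type*} [Fintype α] [DecidableEq α]

theorem card_filter_inter_eq_empty (X : Finset α) (r : ℕ) :
    #{e : {e : Finset α // e.card = r} | e.1 ∩ X = ∅} = (Fintype.card α - #X).choose r := by
  rw [← card_compl, ← card_powersetCard, ← card_map (Function.Embedding.subtype _)]
  congr 1
  ext s
  simp [mem_powersetCard, subset_compl_iff_disjoint_right, disjoint_iff_inter_eq_empty, and_comm]

/-- Chernoff's exponential-moment bound: `θ ^ count ≥ θ ^ t` on the event `count < t`, and
`θ ^ count` is a product over the `k` independent coordinates. -/
theorem card_filter_count_lt_mul_rpow_le {E : Type*} [Fintype E] (p : E → Prop) [DecidablePred p]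
    (k : ℕ) {θ t : ℝ} (hθ0 : 0 < θ) (hθ1 : θ ≤ 1) :
    (#{ω : Fin k → E | (#{i | p (ω i)} : ℝ) < t} : ℝ) * θ ^ t ≤
      (Fintype.card E - (1 - θ) * #{e | p e}) ^ k := by
  have moment (ω : Fin k → E) : θ ^ (#{i | p (ω i)} : ℝ) = ∏ i, if p (ω i) then θ else 1 := by
    rw [rpow_natCast, prod_ite, prod_const, prod_const_one, mul_one]
  calc (#{ω : Fin k → E | (#{i | p (ω i)} : ℝ) < t} : ℝ) * θ ^ t
      = ∑ ω : Fin k → E with (#{i | p (ω i)} : ℝ) < t, θ ^ t := by rw [sum_const, nsmul_eq_mul]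
    _ ≤ ∑ ω : Fin k → E with (#{i | p (ω i)} : ℝ) < t, θ ^ (#{i | p (ω i)} : ℝ) :=
        sum_le_sum fun ω hω => rpow_le_rpow_of_exponent_ge hθ0 hθ1 (mem_filter.1 hω).2.le
    _ ≤ ∑ ω : Fin k → E, θ ^ (#{i | p (ω i)} : ℝ) :=
        sum_le_sum_of_subset_of_nonneg (filter_subset _ _) fun ω _ _ => (rpow_pos_of_pos hθ0 _).le
    _ = ∏ _i : Fin k, ∑ e, if p e then θ else 1 := by
        simp only [moment]
        exact (Fintype.prod_sum fun (_ : Fin k) e => if p e then θ else 1).symm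
    _ = (Fintype.card E - (1 - θ) * #{e | p e}) ^ k := by
        have hsplit := card_filter_add_card_filter_not (s := univ) p
        rw [card_univ] at hsplit
        rw [prod_const, card_univ, Fintype.card_fin, sum_ite, sum_const, sum_const, nsmul_eq_mul,
          nsmul_eq_mul, mul_one, ← hsplit, Nat.cast_add]
        ring

theorem card_exists_few_disjoint_edges_mul_rpow_le (r k m : ℕ) {θ t : ℝ} (hθ0 : 0 < θ)
    (hθ1 : θ ≤ 1) :
    (#{ω : Fin k → {e : Finset α // e.card = r} |
        ¬ ∀ X : Finset α, #X = m → t ≤ (#{i | (ω i).1 ∩ X = ∅} : ℝ)} : ℝ) * θ ^ t ≤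
      (Fintype.card α).choose m *
        ((Fintype.card α).choose r - (1 - θ) * (Fintype.card α - m).choose r) ^ k := by
  set few : Finset α → Finset (Fin k → {e : Finset α // e.card = r}) :=
    fun X => {ω | (#{i | (ω i).1 ∩ X = ∅} : ℝ) < t}
  have union : #{ω : Fin k → {e : Finset α // e.card = r} |
      ¬ ∀ X : Finset α, #X = m → t ≤ (#{i | (ω i).1 ∩ X = ∅} : ℝ)} ≤
        ∑ X ∈ powersetCard m univ, #(few X) := by
    refine (card_le_card fun ω hω => ?_).trans card_biUnion_le
    simp only [mem_filter, mem_univ, true_and, not_forall, not_le] at hω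
    obtain ⟨X, hX, hfew⟩ := hω
    exact mem_biUnion.2 ⟨X, mem_powersetCard_univ.2 hX, mem_filter.2 ⟨mem_univ _, hfew⟩⟩
  calc _ ≤ (∑ X ∈ powersetCard m univ, #(few X) : ℝ) * θ ^ t := by
        gcongr; exact_mod_cast union
    _ = ∑ X ∈ powersetCard m univ, (#(few X) : ℝ) * θ ^ t := sum_mul _ _ _
    _ ≤ ∑ _X ∈ powersetCard m univ, ((Fintype.card α).choose r -
          (1 - θ) * (Fintype.card α - m).choose r : ℝ) ^ k := by
        refine sum_le_sum fun X hX => ?_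
        have h := card_filter_count_lt_mul_rpow_le (fun e : {e : Finset α // e.card = r} =>
          e.1 ∩ X = ∅) k (t := t) hθ0 hθ1
        rwa [Fintype.card_finset_len, card_filter_inter_eq_empty,
          (mem_powersetCard_univ.1 hX)] at h
    _ = _ := by rw [sum_const, card_powersetCard, card_univ, nsmul_eq_mul]

theorem one_sub_le_card_forall_many_disjoint_edges_div {r k m : ℕ} {θ t : ℝ} (hθ0 : 0 < θ)
    (hθ1 : θ ≤ 1) (hmr : m + r < Fintype.card α) :
    1 - (Fintype.card α).choose m *
        exp (-(k * (1 - θ) * exp (-(m * r / (Fintype.card α - m - r))))) / θ ^ t ≤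
      (#{ω : Fin k → {e : Finset α // e.card = r} |
          ∀ X : Finset α, #X = m → t ≤ (#{i | (ω i).1 ∩ X = ∅} : ℝ)} : ℝ) /
        Fintype.card (Fin k → {e : Finset α // e.card = r}) := by
  set n := Fintype.card α
  set N := n.choose r
  set D := (n - m).choose r
  have hN : (0 : ℝ) < N := by exact_mod_cast Nat.choose_pos (by omega)
  have hDN : (D : ℝ) ≤ N := by exact_mod_cast Nat.choose_le_choose r (Nat.sub_le n m)
  have hcard : (Fintype.card (Fin k → {e : Finset α // e.card = r}) : ℝ) = (N : ℝ) ^ k := by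
    rw [Fintype.card_fun, Fintype.card_finset_len, Fintype.card_fin]; push_cast; rfl
  have hbad := card_exists_few_disjoint_edges_mul_rpow_le (α := α) r k m (t := t) hθ0 hθ1
  have hratio : N * exp (-(m * r / (n - m - r))) ≤ (D : ℝ) := choose_mul_exp_le_choose_sub hmr
  have hmain : ((N : ℝ) - (1 - θ) * D) ^ k ≤
      N ^ k * exp (-(k * (1 - θ) * exp (-(m * r / (n - m - r))))) := by
    refine (sub_pow_le_pow_mul_exp hN (by nlinarith) k).trans ?_
    have := mul_le_mul_of_nonneg_left hratio (by nlinarith : (0 : ℝ) ≤ k * (1 - θ))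
    gcongr
    rw [le_div_iff₀ hN]
    linarith
  have hθt : 0 < θ ^ t := rpow_pos_of_pos hθ0 t
  set G := #{ω : Fin k → {e : Finset α // e.card = r} |
    ∀ X : Finset α, #X = m → t ≤ (#{i | (ω i).1 ∩ X = ∅} : ℝ)}
  set B := #{ω : Fin k → {e : Finset α // e.card = r} |
    ¬ ∀ X : Finset α, #X = m → t ≤ (#{i | (ω i).1 ∩ X = ∅} : ℝ)}
  have hsum : (G : ℝ) + B = N ^ k := by
    rw [← hcard]; exact_mod_cast (card_filter_add_card_filter_not _).trans card_univ
  have hB : (B : ℝ) ≤ n.choose m * exp (-(k * (1 - θ) * exp (-(m * r / (n - m - r))))) / θ ^ t *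
      N ^ k := by
    rw [div_mul_eq_mul_div, le_div_iff₀ hθt]
    calc (B : ℝ) * θ ^ t ≤ n.choose m * ((N : ℝ) - (1 - θ) * D) ^ k := hbad
      _ ≤ n.choose m * (N ^ k * exp (-(k * (1 - θ) * exp (-(m * r / (n - m - r)))))) := by
          gcongr
      _ = _ := by ring
  rw [hcard, le_div_iff₀ (by positivity)]
  linarith

end Counting

theorem sq_le_exp {L : ℝ} (hL : 6 ≤ L) : L ^ 2 ≤ exp L := by
  have h := pow_div_factorial_le_exp L (by linarith) 3
  norm_num [Nat.factorial] at h
  nlinarith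

theorem one_div_729_le_exp_neg_six : 1 / 729 ≤ exp (-6) := by
  have he : exp 1 ≤ 3 := by linarith [exp_one_lt_d9]
  have h6 : exp 6 ≤ 729 := by
    calc exp 6 = exp 1 ^ 6 := by rw [← exp_nat_mul]; norm_num
      _ ≤ 3 ^ 6 := by gcongr
      _ = 729 := by norm_num
  rw [exp_neg, one_div]
  exact inv_anti₀ (exp_pos 6) h6

theorem log_le_two_mul_sqrt {x : ℝ} (hx : 0 ≤ x) : log x ≤ 2 * √x := by
  have h := log_le_rpow_div hx (by norm_num : (0 : ℝ) < 1 / 2)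
  rwa [← sqrt_eq_rpow, div_eq_mul_inv, inv_div, div_one, mul_comm] at h

theorem ten_mul_mul_log_le_sq {L : ℝ} (hL : 400 ≤ L) : 10 * L * log L ≤ L ^ 2 := by
  have hL0 : 0 ≤ L := by linarith
  have hs : 20 ≤ √L := by rw [le_sqrt (by norm_num) hL0]; linarith
  have hsL : √L * √L = L := mul_self_sqrt hL0
  have hlog : log L ≤ L / 10 := by nlinarith [log_le_two_mul_sqrt hL0]
  nlinarith

theorem cube_add_log_mul_pow_nine_le_pow_ten {L : ℝ} (hL : 10 ^ 8 ≤ L) :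
    2 * L ^ 3 + log L * (L ^ 9 / 2) + L ≤ L ^ 10 / 1458 := by
  have hL0 : 0 ≤ L := by linarith
  have hlog := log_le_two_mul_sqrt hL0
  have hs : 10 ^ 4 ≤ √L := by
    rw [le_sqrt (by norm_num) hL0]; linarith
  have hsL : √L * √L = L := mul_self_sqrt hL0
  have h1 : log L * (L ^ 9 / 2) ≤ L ^ 10 / 10 ^ 4 := by
    calc log L * (L ^ 9 / 2) ≤ 2 * √L * (L ^ 9 / 2) := by gcongr
      _ = √L * L ^ 9 * 10 ^ 4 / 10 ^ 4 := by ring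
      _ ≤ √L * L ^ 9 * √L / 10 ^ 4 := by gcongr
      _ = L ^ 10 / 10 ^ 4 := by rw [mul_right_comm, hsL]; ring
  have h2 : 2 * L ^ 3 + L ≤ L ^ 10 / 10 ^ 4 := by
    have hL1 : 1 ≤ L := by linarith
    have h3 : L ≤ L ^ 3 := le_self_pow₀ hL1 (by norm_num)
    have h7 : 3 * 10 ^ 4 ≤ L ^ 7 := by
      calc (3 * 10 ^ 4 : ℝ) ≤ 10 ^ 8 := by norm_num
        _ ≤ L := hL
        _ ≤ L ^ 7 := le_self_pow₀ hL1 (by norm_num)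
    have : L ^ 10 = L ^ 7 * L ^ 3 := by ring
    rw [this]
    nlinarith [pow_nonneg hL0 3]
  linarith [pow_nonneg hL0 10]

theorem choose_le_exp_two_mul_cube {n m k : ℕ} {L : ℝ} (hk : (k : ℝ) = exp L) (hL : 0 ≤ L)
    (hn : n ≤ k * L + 1) (hm : m ≤ L ^ 2) : (n.choose m : ℝ) ≤ exp (2 * L ^ 3) := by
  have hk1 : (1 : ℝ) ≤ k := hk ▸ one_le_exp hL
  have hnk : (n : ℝ) ≤ exp L ^ 2 := by
    nlinarith [add_one_le_exp L]
  calc (n.choose m : ℝ) ≤ (n : ℝ) ^ m := by exact_mod_cast Nat.choose_le_pow n m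
    _ ≤ (exp L ^ 2) ^ m := by gcongr
    _ = exp (2 * L * m) := by rw [← pow_mul, ← exp_nat_mul]; push_cast; ring_nf
    _ ≤ exp (2 * L ^ 3) := exp_le_exp.2 (by nlinarith [mul_le_mul_of_nonneg_left hm hL])

theorem pow_ten_div_le_mul_exp {n m k : ℕ} {L : ℝ} (hk : (k : ℝ) = exp L) (hL : 6 ≤ L)
    (hn : k * L ≤ n) (hm : m ≤ L ^ 2 - 10 * L * log L) :
    L ^ 10 / 1458 ≤ k * (1 - L⁻¹) * exp (-(m * k / (n - m - k))) := by
  have hk0 : (0 : ℝ) < k := hk ▸ exp_pos L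
  have hlog : 0 ≤ log L := log_nonneg (by linarith)
  have hmk : (m : ℝ) ≤ k := by nlinarith [sq_le_exp hL]
  have hgap : k * (L - 2) ≤ (n : ℝ) - m - k := by linarith
  have hgap0 : 0 < k * (L - 2) := by nlinarith
  have hexponent : m * k / (n - m - k) ≤ L - 10 * log L + 6 := by
    calc m * k / (n - m - k) ≤ (L ^ 2 - 10 * L * log L) * k / (k * (L - 2)) := by
          gcongr
          exact mul_nonneg ((m.cast_nonneg (α := ℝ)).trans hm) hk0.le
      _ = (L ^ 2 - 10 * L * log L) / (L - 2) := by field_simp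
      _ ≤ L - 10 * log L + 6 := by
          rw [div_le_iff₀ (by linarith)]; nlinarith
  have hexp : k * exp (-(L - 10 * log L + 6)) = L ^ 10 * exp (-6) := by
    rw [hk, show -(L - 10 * log L + 6) = -L + 10 * log L + -6 by ring, exp_add, exp_add,
      exp_neg L, show 10 * log L = (10 : ℕ) * log L by norm_num, exp_nat_mul, exp_log (by linarith)]
    field_simp
  have hhalf : (1 : ℝ) / 2 ≤ 1 - L⁻¹ := by
    rw [le_sub_comm, inv_le_comm₀ (by linarith) (by norm_num)]; linarith
  calc L ^ 10 / 1458 = L ^ 10 * (1 / 729) * (1 / 2) := by ring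
    _ ≤ L ^ 10 * exp (-6) * (1 - L⁻¹) := by gcongr; exact one_div_729_le_exp_neg_six
    _ = k * exp (-(L - 10 * log L + 6)) * (1 - L⁻¹) := by rw [hexp]
    _ ≤ k * exp (-(m * k / (n - m - k))) * (1 - L⁻¹) := by gcongr
    _ = k * (1 - L⁻¹) * exp (-(m * k / (n - m - k))) := by ring

theorem choose_mul_exp_div_rpow_le_inv {n m k : ℕ} {L : ℝ} (hk : (k : ℝ) = exp L)
    (hL : 10 ^ 8 ≤ L) (hn : k * L ≤ n) (hn' : n ≤ k * L + 1) (hm : m ≤ L ^ 2 - 10 * L * log L) :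
    n.choose m * exp (-(k * (1 - L⁻¹) * exp (-(m * k / (n - m - k))))) / L⁻¹ ^ (L ^ 9 / 2) ≤
      (k : ℝ)⁻¹ := by
  have hL0 : 0 < L := by linarith
  have hm2 : (m : ℝ) ≤ L ^ 2 := hm.trans (by nlinarith [log_nonneg (by linarith : (1 : ℝ) ≤ L)])
  have hrpow : L⁻¹ ^ (L ^ 9 / 2) = (exp (log L * (L ^ 9 / 2)))⁻¹ := by
    rw [inv_rpow hL0.le, rpow_def_of_pos hL0]
  rw [hrpow, div_inv_eq_mul, hk, ← exp_neg, ← hk]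
  calc (n.choose m : ℝ) * exp (-(k * (1 - L⁻¹) * exp (-(m * k / (n - m - k))))) *
        exp (log L * (L ^ 9 / 2))
      ≤ exp (2 * L ^ 3) * exp (-(L ^ 10 / 1458)) * exp (log L * (L ^ 9 / 2)) := by
        gcongr
        · exact choose_le_exp_two_mul_cube hk hL0.le hn' hm2
        · exact pow_ten_div_le_mul_exp hk (by linarith) hn hm
    _ = exp (2 * L ^ 3 + log L * (L ^ 9 / 2) - L ^ 10 / 1458) := by
        rw [← exp_add, ← exp_add]; ring_nf
    _ ≤ exp (-L) := exp_le_exp.2 (by linarith [cube_add_log_mul_pow_nine_le_pow_ten hL])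


/-- let `H'_k` be the random `k`-uniform multi-hypergraph on the vertex set
`[⌈k log k⌉]` (encoded as `Fin ⌈k log k⌉`) whose `k` edges are chosen independently and
uniformly at random from all `k`-element subsets of the vertex set (so an outcome is a
function `Fin k → {e // e.card = k}` and all outcomes are equally likely).  Then the
probability of the event that for every vertex set `X` of size
`⌊log² k − 10 log k · log log k⌋` at least `log⁹ k / 2` of the edges are disjoint from `X`
tends to `1` as `k → ∞`. -/
theorem stmt_12 :
    Filter.Tendsto
      (fun k : ℕ =>
        (((Finset.univ :
            Finset (Fin k → {e : Finset (Fin ⌈(k : ℝ) * Real.log k⌉₊) // e.card = k})).filter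
          (fun ω => ∀ X : Finset (Fin ⌈(k : ℝ) * Real.log k⌉₊),
            X.card = ⌊(Real.log k) ^ 2 - 10 * Real.log k * Real.log (Real.log k)⌋₊ →
            (Real.log k) ^ 9 / 2 ≤
              ((Finset.univ.filter (fun i : Fin k => (ω i).1 ∩ X = ∅)).card : ℝ))).card : ℝ)
        / (Fintype.card (Fin k → {e : Finset (Fin ⌈(k : ℝ) * Real.log k⌉₊) // e.card = k})))
      Filter.atTop (nhds 1) := by
  have hlog := tendsto_log_atTop.comp (tendsto_natCast_atTop_atTop (R := ℝ))
  refine tendsto_of_tendsto_of_tendsto_of_le_of_le' (g := fun k : ℕ => 1 - (k : ℝ)⁻¹)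
    (by simpa using tendsto_const_nhds.sub (tendsto_inv_atTop_nhds_zero_nat (𝕜 := ℝ)))
    tendsto_const_nhds ?_ (Filter.Eventually.of_forall fun k =>
      div_le_one_of_le₀ (by exact_mod_cast card_le_univ _) (by positivity))
  filter_upwards [hlog.eventually_ge_atTop (10 ^ 8)] with k (hL : 10 ^ 8 ≤ log (k : ℝ))
  set L := log (k : ℝ)
  have hk0 : (0 : ℝ) < k := Nat.cast_pos.2 (Nat.pos_of_ne_zero (by rintro rfl; norm_num [L] at hL))
  have hk : (k : ℝ) = exp L := (exp_log hk0).symm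
  set n := ⌈(k : ℝ) * L⌉₊
  set m := ⌊L ^ 2 - 10 * L * log L⌋₊
  have hn : k * L ≤ n := Nat.le_ceil _
  have hn' : n ≤ k * L + 1 := (Nat.ceil_lt_add_one (by positivity)).le
  have hm : m ≤ L ^ 2 - 10 * L * log L :=
    Nat.floor_le (sub_nonneg.2 (ten_mul_mul_log_le_sq (by linarith)))
  have hmk : m + k < n := by
    have hm2 : (m : ℝ) ≤ L ^ 2 := hm.trans (by nlinarith [log_nonneg (by linarith : (1 : ℝ) ≤ L)])
    have hm_le_k : (m : ℝ) ≤ k := hm2.trans (hk ▸ sq_le_exp (by linarith))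
    exact_mod_cast (show (m : ℝ) + k < n by nlinarith)
  have h := one_sub_le_card_forall_many_disjoint_edges_div (α := Fin n) (r := k) (k := k) (m := m)
    (θ := L⁻¹) (t := L ^ 9 / 2) (inv_pos.2 (by linarith)) (inv_le_one_of_one_le₀ (by linarith))
    (by rwa [Fintype.card_fin])
  rw [Fintype.card_fin] at h
  exact (sub_le_sub_left (choose_mul_exp_div_rpow_le_inv hk hL hn hn' hm) 1).trans h
end

section
/- For every k ≥ 2, the k-uniform hypergraph H_{k,2} with vertex set {a, b, c, u_1, …, u_{k−1}, v_1, …, v_{k−1}} (2k+1 vertices) and edge set {{a,u_1,…,u_{k−1}}, {b,u_1,…,u_{k−1}}, {b,v_1,…,v_{k−1}}, {c,v_1,…,v_{k−1}}} satisfies γ_g(H_{k,2}) = γ_g'(H_{k,2}) = 3. -/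
attribute [local instance 10] Classical.propDecidable

variable {V : Type}

/-- The Staller-start game domination number. -/
noncomputable def gammaGame' [Fintype V] (H : Finset (Finset V)) : ℕ :=
  domGameVal H false ∅

/-- The hypergraph `H_{k,2}` on `2k+1` vertices encoded as `Fin (2k+1)`:
`a = 0`, `b = 1`, `c = 2`, `u_1, …, u_{k-1}` are `3, …, k+1` and `v_1, …, v_{k-1}` are
`k+2, …, 2k`.  Its edges are `{a} ∪ U`, `{b} ∪ U`, `{b} ∪ W`, `{c} ∪ W`, where
`U = {u_1,…,u_{k-1}}` and `W = {v_1,…,v_{k-1}}`. -/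
noncomputable def Hk2 (k : ℕ) : Finset (Finset (Fin (2 * k + 1))) :=
  {insert 0 (Finset.univ.filter (fun x : Fin (2 * k + 1) => 3 ≤ (x : ℕ) ∧ (x : ℕ) ≤ k + 1)),
   insert 1 (Finset.univ.filter (fun x : Fin (2 * k + 1) => 3 ≤ (x : ℕ) ∧ (x : ℕ) ≤ k + 1)),
   insert 1 (Finset.univ.filter (fun x : Fin (2 * k + 1) => k + 2 ≤ (x : ℕ))),
   insert 2 (Finset.univ.filter (fun x : Fin (2 * k + 1) => k + 2 ≤ (x : ℕ)))}

/-! No closed neighborhood contains both `a` and `c`, and `N[b]` contains neither. So Staller keeps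
the game alive for three moves by opening with `b`, or by answering `b` (`a` if Dominator took
`b`). Conversely, Dominator opening with `u_1` can finish with `c` on his second move; and if
Staller opens, Dominator's reply dominates everything, except after `b`, where his reply `a`
leaves `c` alone undominated. Each of these facts is a finite check on the five vertex classes. -/

section Game

variable [Fintype V] (H : Finset (Finset V))

lemma mem_closedNbhd_self (v : V) : v ∈ closedNbhd H v := by
  simp [closedNbhd]

lemma not_closedNbhd_subset_empty (v : V) : ¬ closedNbhd H v ⊆ ∅ :=
  fun h => Finset.notMem_empty v (h (mem_closedNbhd_self H v))

lemma exists_not_closedNbhd_subset {S : Finset V} (hS : S ≠ Finset.univ) :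
    ∃ v, ¬ closedNbhd H v ⊆ S := by
  obtain ⟨v, hv⟩ : ∃ v, v ∉ S := by simpa [Finset.eq_univ_iff_forall] using hS
  exact ⟨v, fun h => hv (h (mem_closedNbhd_self H v))⟩

lemma legalMoves_nonempty {S : Finset V} {v : V} (hv : ¬ closedNbhd H v ⊆ S) :
    (Finset.univ.filter fun w => ¬ closedNbhd H w ⊆ S).Nonempty :=
  ⟨v, Finset.mem_filter.mpr ⟨Finset.mem_univ v, hv⟩⟩

lemma domGameVal_univ (dom : Bool) : domGameVal H dom Finset.univ = 0 := by
  rw [domGameVal]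
  simp

lemma domGameVal_pos {S : Finset V} (dom : Bool) (hS : S ≠ Finset.univ) :
    0 < domGameVal H dom S := by
  obtain ⟨v, hv⟩ := exists_not_closedNbhd_subset H hS
  rw [domGameVal, dif_pos (legalMoves_nonempty H hv)]
  omega

lemma domGameVal_true_le_succ_of_move {S : Finset V} {v : V} (hv : ¬ closedNbhd H v ⊆ S) :
    domGameVal H true S ≤ domGameVal H false (S ∪ closedNbhd H v) + 1 := by
  rw [domGameVal, dif_pos (legalMoves_nonempty H hv), if_pos rfl, add_comm]
  gcongr
  exact Finset.inf'_le (fun w : {x // _} => domGameVal H false (S ∪ closedNbhd H w.1))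
    (Finset.mem_attach _ ⟨v, Finset.mem_filter.mpr ⟨Finset.mem_univ v, hv⟩⟩)

lemma succ_le_domGameVal_true {S : Finset V} {n : ℕ} (hS : S ≠ Finset.univ)
    (h : ∀ v, ¬ closedNbhd H v ⊆ S → n ≤ domGameVal H false (S ∪ closedNbhd H v)) :
    n + 1 ≤ domGameVal H true S := by
  obtain ⟨v, hv⟩ := exists_not_closedNbhd_subset H hS
  rw [domGameVal, dif_pos (legalMoves_nonempty H hv), if_pos rfl, add_comm]
  gcongr
  exact Finset.le_inf' _ _ fun w _ => h w.1 (Finset.mem_filter.mp w.2).2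

lemma domGameVal_false_le_succ {S : Finset V} {n : ℕ}
    (h : ∀ v, ¬ closedNbhd H v ⊆ S → domGameVal H true (S ∪ closedNbhd H v) ≤ n) :
    domGameVal H false S ≤ n + 1 := by
  rw [domGameVal]
  by_cases hne : (Finset.univ.filter fun w => ¬ closedNbhd H w ⊆ S).Nonempty
  · rw [dif_pos hne, if_neg Bool.false_ne_true, add_comm]
    gcongr
    exact Finset.sup'_le _ _ fun w _ => h w.1 (Finset.mem_filter.mp w.2).2
  · rw [dif_neg hne]
    omega

lemma succ_le_domGameVal_false_of_move {S : Finset V} {v : V} (hv : ¬ closedNbhd H v ⊆ S) :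
    domGameVal H true (S ∪ closedNbhd H v) + 1 ≤ domGameVal H false S := by
  rw [domGameVal.eq_1 H false S, dif_pos (legalMoves_nonempty H hv), if_neg Bool.false_ne_true,
    add_comm]
  gcongr
  exact Finset.le_sup' (fun w : {x // _} => domGameVal H true (S ∪ closedNbhd H w.1))
    (Finset.mem_attach _ ⟨v, Finset.mem_filter.mpr ⟨Finset.mem_univ v, hv⟩⟩)

lemma domGameVal_true_le_one {S : Finset V} {v : V}
    (h : S ∪ closedNbhd H v = Finset.univ) : domGameVal H true S ≤ 1 := by
  by_cases hv : closedNbhd H v ⊆ S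
  · rw [Finset.union_eq_left.mpr hv] at h
    rw [h, domGameVal_univ]
    exact zero_le_one
  · simpa [h, domGameVal_univ] using domGameVal_true_le_succ_of_move H hv

lemma domGameVal_false_le_one {S : Finset V}
    (h : ∀ v, ¬ closedNbhd H v ⊆ S → S ∪ closedNbhd H v = Finset.univ) :
    domGameVal H false S ≤ 1 :=
  domGameVal_false_le_succ H fun v hv => by rw [h v hv, domGameVal_univ]

end Game

namespace Hk2

/-- The vertex classes `a`, `b`, `c`, `U`, `W` of `H_{k,2}`; vertices of one class have the same
closed neighborhood `Cls.nbhd`, so every position of the game is a union of classes. -/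
inductive Cls
  | a | b | c | u | w
  deriving DecidableEq

instance : Fintype Cls where
  elems := {.a, .b, .c, .u, .w}
  complete p := by cases p <;> decide

def Cls.nbhd : Cls → Finset Cls
  | .a => {.a, .u}
  | .b => {.b, .u, .w}
  | .c => {.c, .w}
  | .u => {.a, .b, .u}
  | .w => {.b, .c, .w}

def cls (k : ℕ) (x : Fin (2 * k + 1)) : Cls :=
  if (x : ℕ) = 0 then .a else if (x : ℕ) = 1 then .b else if (x : ℕ) = 2 then .c
  else if (x : ℕ) ≤ k + 1 then .u else .w

lemma cls_surjective {k : ℕ} (hk : 2 ≤ k) : Function.Surjective (cls k) := by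
  intro p
  cases p
  · exact ⟨⟨0, by omega⟩, by simp [cls]⟩
  · exact ⟨⟨1, by omega⟩, by simp [cls]⟩
  · exact ⟨⟨2, by omega⟩, by simp [cls]⟩
  · exact ⟨⟨3, by omega⟩, by simp [cls]; omega⟩
  · exact ⟨⟨k + 2, by omega⟩, by simp [cls]; omega⟩

lemma mem_closedNbhd_iff {k : ℕ} (x v : Fin (2 * k + 1)) :
    x ∈ closedNbhd (Hk2 k) v ↔ cls k x ∈ (cls k v).nbhd := by
  rcases Nat.eq_zero_or_pos k with rfl | hk
  · simp [Fin.fin_one_eq_zero x, Fin.fin_one_eq_zero v, closedNbhd, cls, Cls.nbhd]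
  have h0 : ((0 : Fin (2 * k + 1)) : ℕ) = 0 := rfl
  have h1 : ((1 : Fin (2 * k + 1)) : ℕ) = 1 := by
    rw [Fin.val_one', Nat.mod_eq_of_lt (by omega)]
  have h2 : ((2 : Fin (2 * k + 1)) : ℕ) = 2 := by
    simp [Nat.mod_eq_of_lt (show 2 < 2 * k + 1 by omega)]
  simp only [closedNbhd, Hk2, Finset.mem_filter, Finset.mem_univ, true_and, Finset.mem_insert,
    Finset.mem_singleton, Fin.ext_iff, h0, h1, h2, exists_eq_or_imp, exists_eq_left]
  have := x.isLt
  have := v.isLt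
  unfold cls
  split_ifs <;> simp [Cls.nbhd] <;> omega

def vertsOf (k : ℕ) (P : Finset Cls) : Finset (Fin (2 * k + 1)) :=
  Finset.univ.filter fun x => cls k x ∈ P

lemma closedNbhd_eq_vertsOf {k : ℕ} (v : Fin (2 * k + 1)) :
    closedNbhd (Hk2 k) v = vertsOf k (cls k v).nbhd := by
  ext x
  simp [vertsOf, mem_closedNbhd_iff]

lemma vertsOf_union {k : ℕ} [DecidableEq (Fin (2 * k + 1))] (P Q : Finset Cls) :
    vertsOf k P ∪ vertsOf k Q = vertsOf k (P ∪ Q) := by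
  ext x
  simp [vertsOf]

lemma vertsOf_subset_vertsOf_iff {k : ℕ} (hk : 2 ≤ k) {P Q : Finset Cls} :
    vertsOf k P ⊆ vertsOf k Q ↔ P ⊆ Q := by
  refine ⟨fun h p hp => ?_, fun h x hx => ?_⟩
  · obtain ⟨x, rfl⟩ := cls_surjective hk p
    simpa [vertsOf] using h (by simpa [vertsOf] using hp)
  · simp only [vertsOf, Finset.mem_filter, Finset.mem_univ, true_and] at hx ⊢
    exact h hx

lemma vertsOf_eq_univ_iff {k : ℕ} (hk : 2 ≤ k) {P : Finset Cls} :
    vertsOf k P = Finset.univ ↔ P = Finset.univ := by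
  have : vertsOf k Finset.univ = Finset.univ := by simp [vertsOf]
  rw [← this, Finset.Subset.antisymm_iff, Finset.Subset.antisymm_iff,
    vertsOf_subset_vertsOf_iff hk, vertsOf_subset_vertsOf_iff hk]

lemma Cls.nbhd_u_union_union_nbhd_c (p : Cls) :
    Cls.u.nbhd ∪ p.nbhd ∪ Cls.c.nbhd = Finset.univ := by
  cases p <;> decide

lemma Cls.exists_move_not_finishing (p : Cls) :
    ∃ q : Cls, ¬ q.nbhd ⊆ p.nbhd ∧ p.nbhd ∪ q.nbhd ≠ Finset.univ := by
  cases p <;> decide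

lemma Cls.nbhd_b_union_ne_univ (p : Cls) : Cls.b.nbhd ∪ p.nbhd ≠ Finset.univ := by
  cases p <;> decide

lemma Cls.exists_reply_forcing_finish (p : Cls) :
    ∃ q : Cls, ¬ q.nbhd ⊆ p.nbhd ∧
      ∀ r : Cls, ¬ r.nbhd ⊆ p.nbhd ∪ q.nbhd →
        p.nbhd ∪ q.nbhd ∪ r.nbhd = Finset.univ := by
  cases p <;> decide

variable {k : ℕ}

theorem gammaGame_le_three (hk : 2 ≤ k) : gammaGame (Hk2 k) ≤ 3 := by
  obtain ⟨u, hu⟩ := cls_surjective hk .u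
  obtain ⟨c, hc⟩ := cls_surjective hk .c
  refine (domGameVal_true_le_succ_of_move _ (not_closedNbhd_subset_empty _ u)).trans
    (Nat.succ_le_succ (domGameVal_false_le_succ _ fun v _ => domGameVal_true_le_one _ (v := c) ?_))
  simp only [Finset.empty_union, closedNbhd_eq_vertsOf, vertsOf_union, vertsOf_eq_univ_iff hk,
    hu, hc]
  exact Cls.nbhd_u_union_union_nbhd_c _

theorem three_le_gammaGame (hk : 2 ≤ k) : 3 ≤ gammaGame (Hk2 k) := by
  refine succ_le_domGameVal_true _ Finset.univ_nonempty.ne_empty.symm fun v _ => ?_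
  obtain ⟨q, hlegal, hne⟩ := Cls.exists_move_not_finishing (cls k v)
  obtain ⟨w, rfl⟩ := cls_surjective hk q
  refine le_trans (Nat.succ_le_succ (domGameVal_pos _ _ ?_))
    (succ_le_domGameVal_false_of_move _ (v := w) ?_)
  · simpa only [Finset.empty_union, closedNbhd_eq_vertsOf, vertsOf_union,
      vertsOf_eq_univ_iff hk, ne_eq]
  · simpa only [Finset.empty_union, closedNbhd_eq_vertsOf, vertsOf_subset_vertsOf_iff hk]

theorem gammaGame'_le_three (hk : 2 ≤ k) : gammaGame' (Hk2 k) ≤ 3 := by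
  refine domGameVal_false_le_succ _ fun v _ => ?_
  obtain ⟨q, hlegal, hfinish⟩ := Cls.exists_reply_forcing_finish (cls k v)
  obtain ⟨w, rfl⟩ := cls_surjective hk q
  refine (domGameVal_true_le_succ_of_move _ (v := w) ?_).trans
    (Nat.succ_le_succ (domGameVal_false_le_one _ fun r hr => ?_))
  · simpa only [Finset.empty_union, closedNbhd_eq_vertsOf, vertsOf_subset_vertsOf_iff hk]
  · simp only [Finset.empty_union, closedNbhd_eq_vertsOf, vertsOf_union,
      vertsOf_subset_vertsOf_iff hk, vertsOf_eq_univ_iff hk] at hr ⊢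
    exact hfinish _ hr

theorem three_le_gammaGame' (hk : 2 ≤ k) : 3 ≤ gammaGame' (Hk2 k) := by
  obtain ⟨b, hb⟩ := cls_surjective hk .b
  refine le_trans
    (Nat.succ_le_succ (succ_le_domGameVal_true _ ?_ fun v _ => domGameVal_pos _ _ ?_))
    (succ_le_domGameVal_false_of_move _ (not_closedNbhd_subset_empty _ b))
  · simp only [Finset.empty_union, closedNbhd_eq_vertsOf, vertsOf_eq_univ_iff hk, ne_eq, hb]
    decide
  · simp only [Finset.empty_union, closedNbhd_eq_vertsOf, vertsOf_union,
      vertsOf_eq_univ_iff hk, ne_eq, hb]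
    exact Cls.nbhd_b_union_ne_univ _

end Hk2

/-- for every `k ≥ 2`, `γ_g(H_{k,2}) = γ_g'(H_{k,2}) = 3`. -/
theorem stmt_18 (k : ℕ) (hk : 2 ≤ k) :
    gammaGame (Hk2 k) = 3 ∧ gammaGame' (Hk2 k) = 3 :=
  ⟨(Hk2.gammaGame_le_three hk).antisymm (Hk2.three_le_gammaGame hk),
    (Hk2.gammaGame'_le_three hk).antisymm (Hk2.three_le_gammaGame' hk)⟩
end
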